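/- Let g be a partial Boolean function with D_g ⊆ {0,1}^G and let h : {0,1}^H → {0,1} be total with min(bs_0(h), bs_1(h)) ≥ B. Then there exists an input X to the cheat-sheet function (g∘h)^c_cs (for any c ≥ 1) whose block sensitivity is at least B·G: explicitly, choosing for each of the c copies an input z^{(i)} ∈ D_g, for each bit z^{(i)}_j an h-input x^{(i)}_j with h(x^{(i)}_j) = z^{(i)}_j attaining B disjoint sensitive blocks, placing a correct certificate in the addressed cheat sheet and garbage elsewhere, the resulting input evaluates to 1 and flipping any one of the B·G disjoint sensitive blocks (within any single x^{(i)}_j) changes the output to 0. Hence bs((g∘h)^c_cs) ≥ B·G. -/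

import Mathlib

/-- Flip the bits of `x` inside the block `S`. -/
def flipOn {ι : Type*} [DecidableEq ι] (x : ι → Bool) (S : Finset ι) : ι → Bool :=
  fun i => if i ∈ S then !x i else x i

section CheatSheetBS

variable {G H c m : ℕ}

/-- The index set of an input to the cheat-sheet version of `g ∘ h`:
`c` copies of a `(G×H)`-bit input to `g ∘ h`, plus `2^c` cheat sheets of `m` bits. -/
abbrev CSIdx (G H c m : ℕ) := (Fin c × (Fin G × Fin H)) ⊕ ((Fin c → Bool) × Fin m)

/-- The `i`-th copy of the composed-function input. -/
def copyOf (z : CSIdx G H c m → Bool) (i : Fin c) : Fin G × Fin H → Bool :=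
  fun q => z (Sum.inl (i, q))

/-- The cheat sheet at address `ℓ`. -/
def sheetOf (z : CSIdx G H c m → Bool) (ℓ : Fin c → Bool) : Fin m → Bool :=
  fun j => z (Sum.inr (ℓ, j))

/-- The string of `h`-values of a composed-function input (the input to `g`). -/
def innerVals (h : (Fin H → Bool) → Bool) (w : Fin G × Fin H → Bool) :
    Fin G → Bool :=
  fun j => h fun t => w (j, t)

/-- The cheat-sheet version of `g ∘ h`, with an abstract certification predicate
`Valid ℓ y xs`: output `1` iff every copy's `g`-input is in `D_g` and the cheat
sheet at the address formed by the `g ∘ h` outputs validly certifies this. -/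
def csFun (Dg : Set (Fin G → Bool)) [DecidablePred (· ∈ Dg)]
    (g : (Fin G → Bool) → Bool) (h : (Fin H → Bool) → Bool)
    (Valid : (Fin c → Bool) → (Fin m → Bool) → (Fin c → Fin G × Fin H → Bool) → Prop)
    [∀ ℓ y xs, Decidable (Valid ℓ y xs)]
    (z : CSIdx G H c m → Bool) : Bool :=
  if (∀ i, innerVals h (copyOf z i) ∈ Dg) ∧
      Valid (fun i => g (innerVals h (copyOf z i)))
        (sheetOf z fun i => g (innerVals h (copyOf z i)))
        (copyOf z)
  then true else false

/-- If `h` is total with `min(bs₀(h), bs₁(h)) ≥ B` (for each output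
value `b` there is an input with `B` disjoint sensitive blocks) and `g` is a partial
function on `G` bits (with nonempty domain), then the cheat-sheet version of `g ∘ h`
(with `c ≥ 1` copies and a sound, certificate-determined, complete certification
predicate for which the all-zero sheet is invalid) has an input `X` with value `1`
admitting `B·G` pairwise disjoint sensitive blocks; hence `bs((g∘h)^c_cs) ≥ B·G`. -/
theorem cheatsheet_block_sensitivity (B : ℕ) (hc : 0 < c)
    (Dg : Set (Fin G → Bool)) [DecidablePred (· ∈ Dg)] (hDg : Dg.Nonempty)
    (g : (Fin G → Bool) → Bool) (h : (Fin H → Bool) → Bool)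
    (hbs : ∀ b : Bool, ∃ x : Fin H → Bool, h x = b ∧
      ∃ bl : Fin B → Finset (Fin H),
        (∀ j j', j ≠ j' → Disjoint (bl j) (bl j')) ∧
        ∀ j, h (flipOn x (bl j)) ≠ h x)
    (Valid : (Fin c → Bool) → (Fin m → Bool) → (Fin c → Fin G × Fin H → Bool) → Prop)
    [∀ ℓ y xs, Decidable (Valid ℓ y xs)]
    (hsound : ∀ ℓ y xs, Valid ℓ y xs →
      ∀ i, innerVals h (xs i) ∈ Dg ∧ g (innerVals h (xs i)) = ℓ i)
    (hdet : ∀ ℓ y xs xs', Valid ℓ y xs → Valid ℓ y xs' →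
      ∀ i, innerVals h (xs i) = innerVals h (xs' i))
    (hcomplete : ∀ xs, (∀ i, innerVals h (xs i) ∈ Dg) →
      ∃ y, Valid (fun i => g (innerVals h (xs i))) y xs)
    (hzero : ∀ ℓ xs, ¬ Valid ℓ (fun _ => false) xs) :
    ∃ X : CSIdx G H c m → Bool,
      csFun Dg g h Valid X = true ∧
      ∃ Bl : Fin (B * G) → Finset (CSIdx G H c m),
        (∀ j j', j ≠ j' → Disjoint (Bl j) (Bl j')) ∧
        ∀ j, csFun Dg g h Valid (flipOn X (Bl j)) ≠ csFun Dg g h Valid X := by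
  classical
  obtain ⟨z0, hz0⟩ := hDg
  choose x hx bl hbd hsens using hbs
  set i0 : Fin c := ⟨0, hc⟩ with hi0
  set w0 : Fin G × Fin H → Bool := fun q => x (z0 q.1) q.2 with hw0
  have hiv : innerVals h w0 = z0 := funext fun j => hx (z0 j)
  obtain ⟨y, hy⟩ := hcomplete (fun _ => w0) (fun i => by
    show innerVals h w0 ∈ Dg
    rw [hiv]; exact hz0)
  simp only [hiv] at hy
  have hy' : Valid (fun _ : Fin c => g z0) y (fun _ => w0) := hy
  set X : CSIdx G H c m → Bool :=
    Sum.elim (fun p : Fin c × (Fin G × Fin H) => w0 p.2)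
      (fun p : (Fin c → Bool) × Fin m =>
        if p.1 = (fun _ : Fin c => g z0) then y p.2 else false) with hXdef
  have hcopyX : ∀ i : Fin c, copyOf X i = w0 := fun i => rfl
  have hsheetX : ∀ (ℓ : Fin c → Bool) (k : Fin m),
      sheetOf X ℓ k = if ℓ = (fun _ : Fin c => g z0) then y k else false := fun ℓ k => rfl
  have hXtrue : csFun Dg g h Valid X = true := by
    have hcond : (∀ i, innerVals h (copyOf X i) ∈ Dg) ∧
        Valid (fun i => g (innerVals h (copyOf X i)))
          (sheetOf X fun i => g (innerVals h (copyOf X i))) (copyOf X) := by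
      constructor
      · intro i
        show innerVals h w0 ∈ Dg
        rw [hiv]; exact hz0
      · have e1 : (fun i : Fin c => g (innerVals h (copyOf X i))) = fun _ : Fin c => g z0 :=
          funext fun i => congrArg g hiv
        rw [e1]
        have e2 : sheetOf X (fun _ : Fin c => g z0) = y :=
          funext fun k => by rw [hsheetX, if_pos rfl]
        rw [e2]
        exact hy'
    simp only [csFun, if_pos hcond]
  set blk : Fin B → Fin G → Finset (CSIdx G H c m) :=
    fun b j => (bl (z0 j) b).image (fun t => Sum.inl (i0, (j, t))) with hblk
  refine ⟨X, hXtrue,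
    fun k => blk (finProdFinEquiv.symm k).1 (finProdFinEquiv.symm k).2, ?_, ?_⟩
  · -- disjointness
    intro k k' hne
    have hpne : finProdFinEquiv.symm k ≠ finProdFinEquiv.symm k' :=
      fun hcontra => hne (finProdFinEquiv.symm.injective hcontra)
    set p := finProdFinEquiv.symm k with hpk
    set p' := finProdFinEquiv.symm k' with hpk'
    rw [Finset.disjoint_left]
    intro s hs hs'
    simp only [hblk, Finset.mem_image] at hs hs'
    obtain ⟨t, ht, rfl⟩ := hs
    obtain ⟨t', ht', hst⟩ := hs'
    simp only [Sum.inl.injEq, Prod.mk.injEq] at hst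
    obtain ⟨-, hj, htt⟩ := hst
    by_cases h12 : p.1 = p'.1
    · exact (fun h22 => hpne (Prod.ext h12 h22)) hj.symm
    · rw [htt, hj] at ht'
      exact (Finset.disjoint_left.mp (hbd (z0 p.2) p.1 p'.1 h12) ht) ht'
  · -- each block is sensitive
    intro k
    set p := finProdFinEquiv.symm k with hpk
    set X' := flipOn X (blk p.1 p.2) with hX'def
    rw [hXtrue]
    have hnotinr : ∀ q : (Fin c → Bool) × Fin m, (Sum.inr q : CSIdx G H c m) ∉ blk p.1 p.2 := by
      intro q hq
      simp only [hblk, Finset.mem_image] at hq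
      obtain ⟨t, -, hcontra⟩ := hq
      exact Sum.inl_ne_inr hcontra
    have hinl : ∀ (i : Fin c) (j' : Fin G) (t : Fin H),
        (Sum.inl (i, (j', t)) : CSIdx G H c m) ∈ blk p.1 p.2 ↔
          (i = i0 ∧ j' = p.2 ∧ t ∈ bl (z0 p.2) p.1) := by
      intro i j' t
      constructor
      · intro hq
        simp only [hblk, Finset.mem_image] at hq
        obtain ⟨t', ht', heq⟩ := hq
        simp only [Sum.inl.injEq, Prod.mk.injEq] at heq
        obtain ⟨hi, hj', ht⟩ := heq
        exact ⟨hi.symm, hj'.symm, ht ▸ ht'⟩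
      · rintro ⟨rfl, rfl, ht⟩
        simp only [hblk, Finset.mem_image]
        exact ⟨t, ht, rfl⟩
    have hcopy : ∀ (i : Fin c) (j' : Fin G) (t : Fin H), copyOf X' i (j', t) =
        if i = i0 ∧ j' = p.2 ∧ t ∈ bl (z0 p.2) p.1 then !(w0 (j', t)) else w0 (j', t) := by
      intro i j' t
      show flipOn X (blk p.1 p.2) (Sum.inl (i, (j', t))) = _
      rw [flipOn]
      by_cases hq : i = i0 ∧ j' = p.2 ∧ t ∈ bl (z0 p.2) p.1
      · rw [if_pos ((hinl i j' t).mpr hq), if_pos hq]; rfl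
      · rw [if_neg (fun hmem => hq ((hinl i j' t).mp hmem)), if_neg hq]; rfl
    have hiv' : ∀ i, i ≠ i0 → innerVals h (copyOf X' i) = z0 := by
      intro i hi
      funext j'
      show h (fun t => copyOf X' i (j', t)) = z0 j'
      have e : (fun t => copyOf X' i (j', t)) = x (z0 j') := funext fun t => by
        rw [hcopy, if_neg (fun hcon => hi hcon.1)]
      rw [e, hx]
    have hivj : innerVals h (copyOf X' i0) p.2 = h (flipOn (x (z0 p.2)) (bl (z0 p.2) p.1)) := by
      show h (fun t => copyOf X' i0 (p.2, t)) = _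
      congr 1
      funext t
      rw [hcopy]
      by_cases ht : t ∈ bl (z0 p.2) p.1
      · rw [if_pos ⟨rfl, rfl, ht⟩]
        show (!(x (z0 p.2) t)) = _
        simp only [flipOn, if_pos ht]
      · rw [if_neg (fun hcon => ht hcon.2.2)]
        show x (z0 p.2) t = _
        simp only [flipOn, if_neg ht]
    have hwne : innerVals h (copyOf X' i0) ≠ z0 := by
      intro hcontra
      have h1 := congrFun hcontra p.2
      rw [hivj] at h1
      exact hsens (z0 p.2) p.1 (h1.trans (hx (z0 p.2)).symm)
    have hsheet' : ∀ (ℓ : Fin c → Bool) (k' : Fin m),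
        sheetOf X' ℓ k' = if ℓ = (fun _ : Fin c => g z0) then y k' else false := by
      intro ℓ k'
      show flipOn X (blk p.1 p.2) (Sum.inr (ℓ, k')) = _
      rw [flipOn, if_neg (hnotinr _)]
      exact hsheetX ℓ k'
    intro heq
    simp only [csFun] at heq
    split_ifs at heq with hcond
    · obtain ⟨hA, hV⟩ := hcond
      by_cases hg : g (innerVals h (copyOf X' i0)) = g z0
      · have hL : (fun i : Fin c => g (innerVals h (copyOf X' i))) = fun _ : Fin c => g z0 := by
          funext i
          by_cases hi : i = i0
          · subst hi; exact hg
          · rw [hiv' i hi]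
        rw [hL] at hV
        have hsy : sheetOf X' (fun _ : Fin c => g z0) = y :=
          funext fun k' => by rw [hsheet', if_pos rfl]
        rw [hsy] at hV
        have hd := hdet _ _ _ _ hy' hV i0
        exact hwne (hd.symm.trans hiv)
      · have hLne : (fun i : Fin c => g (innerVals h (copyOf X' i))) ≠ fun _ : Fin c => g z0 :=
          fun hcontra => hg (congrFun hcontra i0)
        have hsz : sheetOf X' (fun i : Fin c => g (innerVals h (copyOf X' i))) = fun _ => false :=
          funext fun k' => by rw [hsheet', if_neg hLne]
        rw [hsz] at hV
        exact hzero _ _ hV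

end CheatSheetBS
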